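/- Let $\mu$ be a non-uniform Bernoulli measure on $\Sigma = \{1,\ldots,K\}^{\mathbb{N}}$ with entropy $h_\mu$ and variance $\rho_\mu > 0$, and let $g : \mathbb{N} \to [1,\infty)$ satisfy $\limsup_{n\to\infty} g(n)/\sqrt{\log\log n} \leq 1$ and $g(n) \to \infty$. Define $n_k = \max\{n \geq 1 : g(n)^2 < k\} + 1$. Then, assuming the large-deviation estimate $\mu(\{\mathbf{i} : \log\mu([\mathbf{i}|_1^n]) + h_\mu n \geq \sqrt{\rho_\mu} a_n \sqrt{n}\}) = e^{-a_n^2(1+\zeta_n)/2}$ with $\zeta_n \to 0$ and $a_n = \sqrt{2}g(n)/2$, one has $\sum_{k=1}^\infty \mu\left(\left\{\mathbf{i} : \frac{\log\mu([\mathbf{i}|_1^{n_k}]) + h_\mu n_k}{\sqrt{2\rho_\mu n_k}\, g(n_k)} \geq \frac{1}{2}\right\}\right) < \infty$, and hence $\mu$-almost every $\mathbf{i}$ satisfies $\limsup_{k\to\infty} \frac{\log\mu([\mathbf{i}|_1^{n_k}]) + h_\mu n_k}{\sqrt{2\rho_\mu n_k}\, g(n_k)} \leq \frac{1}{2}$.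 -/

import Mathlib

/-!
The event at time `n_k` is contained in the large-deviation event at `n = n_k`, whose
measure is `exp (-g(n_k)² (1 + ζ_{n_k}) / 4)`. Since `g(n_k)² ≥ k` by the choice of `n_k`
and `ζ_{n_k} → 0`, this is eventually at most `e^{-k/5}`, a summable sequence; the first
Borel–Cantelli lemma then shows that almost every `i` lies in only finitely many of these
events.
-/

noncomputable section
open MeasureTheory Real Filter

/-- Logarithm with the convention `log x = 0` whenever `x ≤ 1`. -/
def plog (x : ℝ) : ℝ := if x ≤ 1 then 0 else Real.log x

/-- The cylinder `[i|₁ⁿ]` determined by the first `n` symbols of the sequence `i`. -/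
def cylSeq {K : ℕ} (i : ℕ → Fin K) (n : ℕ) : Set (ℕ → Fin K) :=
  {j | ∀ m < n, j m = i m}

/-- In `ℝ` a limsup that is not bounded below takes the junk value `sInf ∅ = 0`. -/
theorem limsup_le_of_eventually_le_of_nonneg {β : Type*} {f : Filter β} {u : β → ℝ} {c : ℝ}
    (hc : 0 ≤ c) (h : ∀ᶠ n in f, u n ≤ c) : limsup u f ≤ c := by
  rw [limsup_eq]
  by_cases hbdd : BddBelow {a | ∀ᶠ n in f, u n ≤ a}
  · exact csInf_le hbdd h
  · rwa [csInf_of_not_bddBelow hbdd, Real.sInf_empty]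

section LastIndexBelow

variable {f : ℕ → ℝ}

theorem bddAbove_setOf_lt_of_tendsto_atTop (hf : Tendsto f atTop atTop) (c : ℝ) :
    BddAbove {n : ℕ | 1 ≤ n ∧ f n < c} := by
  obtain ⟨N, hN⟩ := (hf.eventually_ge_atTop c).exists_forall_of_atTop
  exact ⟨N, fun n hn => not_lt.mp fun hNn => (hN n hNn.le).not_gt hn.2⟩

theorem le_apply_sSup_setOf_lt_add_one (hf : Tendsto f atTop atTop) (c : ℝ) :
    c ≤ f (sSup {n : ℕ | 1 ≤ n ∧ f n < c} + 1) := by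
  by_contra! hlt
  have := le_csSup (bddAbove_setOf_lt_of_tendsto_atTop hf c) ⟨Nat.le_add_left 1 _, hlt⟩
  omega

theorem tendsto_sSup_setOf_lt_add_one (hf : Tendsto f atTop atTop) :
    Tendsto (fun k : ℕ => sSup {n : ℕ | 1 ≤ n ∧ f n < k} + 1) atTop atTop := by
  refine tendsto_atTop.mpr fun N => ?_
  filter_upwards [tendsto_natCast_atTop_atTop.eventually_gt_atTop (f (N + 1))] with k hk
  have := le_csSup (bddAbove_setOf_lt_of_tendsto_atTop hf k) ⟨Nat.le_add_left 1 N, hk⟩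
  omega

end LastIndexBelow

section BorelCantelli

variable {α : Type*} [MeasurableSpace α] {μ : Measure α} {s : ℕ → Set α} {b : ℕ → ℝ}

theorem summable_toReal_measure_of_eventually_le (hb0 : ∀ k, 0 ≤ b k) (hb : Summable b)
    (h : ∀ᶠ k in atTop, μ (s k) ≤ ENNReal.ofReal (b k)) :
    Summable fun k => (μ (s k)).toReal :=
  hb.of_norm_bounded_eventually_nat <| h.mono fun k hk => by
    rw [Real.norm_of_nonneg ENNReal.toReal_nonneg]
    exact ENNReal.toReal_le_of_le_ofReal (hb0 k) hk

theorem ae_eventually_notMem_of_eventually_le (hb0 : ∀ k, 0 ≤ b k) (hb : Summable b)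
    (h : ∀ᶠ k in atTop, μ (s k) ≤ ENNReal.ofReal (b k)) :
    ∀ᵐ x ∂μ, ∀ᶠ k in atTop, x ∉ s k := by
  obtain ⟨k₀, hk₀⟩ := eventually_atTop.mp h
  have htail : ∑' n, μ (s (n + k₀)) ≠ ⊤ := by
    refine ne_top_of_le_ne_top ?_ (ENNReal.tsum_le_tsum fun n => hk₀ (n + k₀) le_add_self)
    rw [← ENNReal.ofReal_tsum_of_nonneg (fun n => hb0 _) ((summable_nat_add_iff k₀).mpr hb)]
    exact ENNReal.ofReal_ne_top
  filter_upwards [ae_eventually_notMem htail] with x hx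
  rwa [← map_add_atTop_eq_nat k₀]

end BorelCantelli

theorem exp_neg_sq_mul_le_exp_pow {x ζ : ℝ} {k : ℕ} (hk : k ≤ x ^ 2) (hζ : -1 / 5 ≤ ζ) :
    exp (-(√2 * x / 2) ^ 2 * (1 + ζ) / 2) ≤ exp (-1 / 5) ^ k := by
  have hsq : (√2 * x / 2) ^ 2 = x ^ 2 / 2 := by
    rw [div_pow, mul_pow, sq_sqrt zero_le_two]; ring
  rw [← exp_nat_mul, exp_le_exp, hsq]
  nlinarith

theorem mul_sqrt_le_of_half_le_div {X ρ n G : ℝ} (hn : 0 ≤ n) (hG : 0 ≤ G)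
    (h : 1 / 2 ≤ X / (√(2 * ρ * n) * G)) : √ρ * (√2 * G / 2 * √n) ≤ X := by
  have hD : 0 < √(2 * ρ * n) * G := by
    rcases (by positivity : 0 ≤ √(2 * ρ * n) * G).eq_or_lt with h0 | h0
    · rw [← h0, div_zero] at h; norm_num at h
    · exact h0
  have hsplit : √(2 * ρ * n) * G = 2 * (√ρ * (√2 * G / 2 * √n)) := by
    rw [sqrt_mul' _ hn, sqrt_mul zero_le_two]; ring
  rw [le_div_iff₀ hD] at h
  linarith

theorem stmt15_general {K : ℕ} (μ : Measure (ℕ → Fin K)) (hEnt ρμ : ℝ) (g : ℕ → ℝ)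
    (hgtop : Tendsto g atTop atTop)
    (nk : ℕ → ℕ)
    (hnk : ∀ k : ℕ, nk k = sSup {n : ℕ | 1 ≤ n ∧ (g n) ^ 2 < (k : ℝ)} + 1)
    (a : ℕ → ℝ) (ha : ∀ n, a n = Real.sqrt 2 * g n / 2)
    (ζ : ℕ → ℝ) (hζ : Tendsto ζ atTop (nhds 0))
    (hLD : ∀ n : ℕ,
      μ {i | Real.sqrt ρμ * (a n * Real.sqrt n)
              ≤ Real.log ((μ (cylSeq i n)).toReal) + hEnt * n}
        = ENNReal.ofReal (exp (-(a n) ^ 2 * (1 + ζ n) / 2))) :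
    Summable (fun k : ℕ =>
      (μ {i | (1 : ℝ) / 2
          ≤ (Real.log ((μ (cylSeq i (nk k))).toReal) + hEnt * nk k)
              / (Real.sqrt (2 * ρμ * nk k) * g (nk k))}).toReal) ∧
    ∀ᵐ i ∂μ, Filter.limsup (fun k : ℕ =>
        (Real.log ((μ (cylSeq i (nk k))).toReal) + hEnt * nk k)
          / (Real.sqrt (2 * ρμ * nk k) * g (nk k))) atTop ≤ 1 / 2 := by
  obtain rfl : a = _ := funext ha
  have hg_sq : Tendsto (fun n => g n ^ 2) atTop atTop := (tendsto_pow_atTop two_ne_zero).comp hgtop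
  have hnk_top : Tendsto nk atTop atTop := by
    simpa only [← hnk] using tendsto_sSup_setOf_lt_add_one hg_sq
  have hk_le : ∀ k : ℕ, (k : ℝ) ≤ g (nk k) ^ 2 := fun k => by
    simpa only [← hnk] using le_apply_sSup_setOf_lt_add_one hg_sq k
  have hbound : ∀ᶠ k in atTop, μ {i | (1 : ℝ) / 2
      ≤ (Real.log ((μ (cylSeq i (nk k))).toReal) + hEnt * nk k)
        / (Real.sqrt (2 * ρμ * nk k) * g (nk k))} ≤ ENNReal.ofReal (exp (-1 / 5) ^ k) := by
    filter_upwards [hnk_top.eventually (hgtop.eventually_ge_atTop 0),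
      hnk_top.eventually (hζ.eventually (Ici_mem_nhds (by norm_num : (-1 / 5 : ℝ) < 0)))]
      with k hg_nonneg hζ_ge
    calc _ ≤ _ := measure_mono fun i hi =>
          mul_sqrt_le_of_half_le_div (Nat.cast_nonneg _) hg_nonneg hi
      _ = _ := hLD (nk k)
      _ ≤ _ := ENNReal.ofReal_le_ofReal (exp_neg_sq_mul_le_exp_pow (hk_le k) hζ_ge)
  have hgeom : Summable fun k : ℕ => exp (-1 / 5) ^ k :=
    summable_geometric_of_lt_one (exp_nonneg _) (exp_lt_one_iff.mpr (by norm_num))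
  have hnonneg : ∀ k : ℕ, 0 ≤ exp (-1 / 5) ^ k := fun k => by positivity
  refine ⟨summable_toReal_measure_of_eventually_le hnonneg hgeom hbound, ?_⟩
  filter_upwards [ae_eventually_notMem_of_eventually_le hnonneg hgeom hbound] with i hi
  exact limsup_le_of_eventually_le_of_nonneg (by norm_num) (hi.mono fun k hk => (not_le.mp hk).le)

/-- For a non-uniform Bernoulli measure `μ` with entropy `h_μ` and variance `ρ_μ > 0`,
`g` with `limsup g(n)/√(loglog n) ≤ 1` and `g → ∞`, and `n_k = max{n ≥ 1 : g(n)² < k} + 1`,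
assuming the large-deviation estimate of Theorem 9.4 of Billingsley with
`a_n = √2 g(n)/2`, the series
`∑_k μ({i : (log μ([i|₁^{n_k}]) + h_μ n_k)/(√(2ρ_μ n_k) g(n_k)) ≥ 1/2})` converges,
and hence for `μ`-a.e. `i` the corresponding `limsup` over `k` is at most `1/2`. -/
theorem stmt15 {K : ℕ} (p : Fin K → ℝ) (hp : ∀ a, 0 < p a) (hpsum : ∑ a, p a = 1)
    (hnonunif : ∃ a, p a ≠ 1 / K)
    (μ : Measure (ℕ → Fin K)) [IsProbabilityMeasure μ]
    (hber : ∀ w : List (Fin K), μ {j | ∀ m : Fin w.length, j (m : ℕ) = w.get m}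
      = ENNReal.ofReal ((w.map p).prod))
    (hEnt ρμ : ℝ)
    (hhEnt : hEnt = -∑ a, p a * Real.log (p a))
    (hρμ : ρμ = ∑ a, p a * (Real.log (p a)) ^ 2 - (∑ a, p a * Real.log (p a)) ^ 2)
    (g : ℕ → ℝ) (hg1 : ∀ n, 1 ≤ g n)
    (hglim : Filter.limsup (fun n : ℕ => g n / Real.sqrt (plog (plog n))) atTop ≤ 1)
    (hgtop : Tendsto g atTop atTop)
    (nk : ℕ → ℕ)
    (hnk : ∀ k : ℕ, nk k = sSup {n : ℕ | 1 ≤ n ∧ (g n) ^ 2 < (k : ℝ)} + 1)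
    (a : ℕ → ℝ) (ha : ∀ n, a n = Real.sqrt 2 * g n / 2)
    (ζ : ℕ → ℝ) (hζ : Tendsto ζ atTop (nhds 0))
    (hLD : ∀ n : ℕ,
      μ {i | Real.sqrt ρμ * (a n * Real.sqrt n)
              ≤ Real.log ((μ (cylSeq i n)).toReal) + hEnt * n}
        = ENNReal.ofReal (exp (-(a n) ^ 2 * (1 + ζ n) / 2))) :
    Summable (fun k : ℕ =>
      (μ {i | (1 : ℝ) / 2
          ≤ (Real.log ((μ (cylSeq i (nk k))).toReal) + hEnt * nk k)
              / (Real.sqrt (2 * ρμ * nk k) * g (nk k))}).toReal) ∧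
    ∀ᵐ i ∂μ, Filter.limsup (fun k : ℕ =>
        (Real.log ((μ (cylSeq i (nk k))).toReal) + hEnt * nk k)
          / (Real.sqrt (2 * ρμ * nk k) * g (nk k))) atTop ≤ 1 / 2 :=
  stmt15_general μ hEnt ρμ g hgtop nk hnk a ha ζ hζ hLD
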